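/- arXiv:0708.3541 — 3 statements merged into one kernel-verified Lean document; each statement's English description precedes it below -/
import Mathlib

section
/- Let l, m ≥ 1 be integers with l + m ≥ 3 and let σ be an involution of {1,…,l+m} without fixed points. For every ζ ∈ Q_{σ,l} there exists ζ' ∈ Q_{σ,l} with Im(ζ'_i) = Im(ζ_i) for all i, such that ζ' defines a suitable polygon, i.e. the two broken lines L1(ζ') and L2(ζ') intersect only at their two common endpoints 0 and Σ_{k=1}^{l} ζ'_k. -/
open Finset Complex ComplexConjugate

/-- Extend a tuple `ζ : Fin n → ℂ` to `ℕ → ℂ` by zero. -/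
noncomputable def pad {n : ℕ} (ζ : Fin n → ℂ) : ℕ → ℂ :=
  fun k => if h : k < n then ζ ⟨k, h⟩ else 0

/-- The set `Q_{σ,l}` of suspension data. -/
def suspensionSet (l m : ℕ) (σ : Fin (l + m) → Fin (l + m)) : Set (Fin (l + m) → ℂ) :=
  {ζ | (∀ i, ζ i = ζ (σ i)) ∧
       (∀ i, 0 < (ζ i).re) ∧
       (∀ i : ℕ, 1 ≤ i → i ≤ l - 1 → 0 < (∑ k ∈ Finset.range i, pad ζ k).im) ∧
       (∀ j : ℕ, 1 ≤ j → j ≤ m - 1 → (∑ k ∈ Finset.range j, pad ζ (l + k)).im < 0) ∧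
       (∑ k ∈ Finset.range l, pad ζ k) = (∑ k ∈ Finset.range m, pad ζ (l + k))}

/-- The top broken line `L1(ζ)`: the union of the segments `[p_{i-1}, p_i]`,
where `p_i = ζ_1 + ⋯ + ζ_i`. -/
noncomputable def brokenLine1 (l m : ℕ) (ζ : Fin (l + m) → ℂ) : Set ℂ :=
  ⋃ i : Fin l,
    segment ℝ (∑ k ∈ Finset.range i.val, pad ζ k) (∑ k ∈ Finset.range (i.val + 1), pad ζ k)

/-- The bottom broken line `L2(ζ)`: the union of the segments `[q_{j-1}, q_j]`,
where `q_j = ζ_{l+1} + ⋯ + ζ_{l+j}`. -/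
noncomputable def brokenLine2 (l m : ℕ) (ζ : Fin (l + m) → ℂ) : Set ℂ :=
  ⋃ j : Fin m,
    segment ℝ (∑ k ∈ Finset.range j.val, pad ζ (l + k))
      (∑ k ∈ Finset.range (j.val + 1), pad ζ (l + k))

/-- `ζ` defines a suitable polygon: the two broken lines intersect only at their two
common endpoints. -/
def definesSuitablePolygon (l m : ℕ) (ζ : Fin (l + m) → ℂ) : Prop :=
  brokenLine1 l m ζ ∩ brokenLine2 l m ζ = {0, ∑ k ∈ Finset.range l, pad ζ k}

/-! ### Auxiliary material -/

section Padd

variable {M : Type*} [AddCommGroup M]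

/-- `pad` for general groups. -/
def padd {n : ℕ} (g : Fin n → M) : ℕ → M := fun k => if h : k < n then g ⟨k, h⟩ else 0

lemma padd_lt {n : ℕ} (g : Fin n → M) {k : ℕ} (h : k < n) : padd g k = g ⟨k, h⟩ := dif_pos h

lemma sum_univ_padd (n : ℕ) (g : Fin n → M) :
    ∑ k ∈ range n, padd g k = ∑ i : Fin n, g i := by
  rw [← Fin.sum_univ_eq_sum_range (fun k => padd g k) n]
  apply Finset.sum_congr rfl
  intro k _
  rw [padd_lt g k.2]

lemma sum_top_filter (l m : ℕ) (g : Fin (l+m) → M) :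
    ∑ i ∈ Finset.univ.filter (fun i : Fin (l+m) => (i:ℕ) < l), g i
      = ∑ k ∈ range l, padd g k := by
  rw [Finset.sum_filter]
  have e0 : ∀ i : Fin (l+m), (if (i:ℕ) < l then g i else 0)
      = (fun k => if k < l then padd g k else 0) (i:ℕ) := by
    intro i
    simp only
    rw [padd_lt g i.2]
  rw [Finset.sum_congr rfl (fun i _ => e0 i),
    Fin.sum_univ_eq_sum_range (fun k => if k < l then padd g k else 0) (l+m),
    ← Finset.sum_filter]
  have : (range (l+m)).filter (fun k => k < l) = range l := by
    ext k; simp [Finset.mem_filter, Finset.mem_range]; omega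
  rw [this]

lemma sum_bot_filter (l m : ℕ) (g : Fin (l+m) → M) :
    ∑ i ∈ Finset.univ.filter (fun i : Fin (l+m) => ¬ (i:ℕ) < l), g i
      = ∑ k ∈ range m, padd g (l+k) := by
  have h1 : ∑ i ∈ Finset.univ.filter (fun i : Fin (l+m) => (i:ℕ) < l), g i
      + ∑ i ∈ Finset.univ.filter (fun i : Fin (l+m) => ¬ (i:ℕ) < l), g i = ∑ i : Fin (l+m), g i := by
    rw [Finset.sum_filter_add_sum_filter_not]
  have h2 : ∑ i : Fin (l+m), g i
      = ∑ k ∈ range l, padd g k + ∑ k ∈ range m, padd g (l+k) := by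
    rw [← sum_univ_padd, Finset.sum_range_add]
  have h3 := sum_top_filter l m g
  have h5 := h1.trans h2
  rw [h3] at h5
  exact add_left_cancel h5

end Padd

/-! ### Segment lemmas -/

lemma mem_seg {x y z : ℂ} (h : z ∈ segment ℝ x y) :
    ∃ t : ℝ, 0 ≤ t ∧ t ≤ 1 ∧ z = x + t • (y - x) := by
  rw [segment_eq_image' ℝ x y] at h
  obtain ⟨t, ht, rfl⟩ := h
  exact ⟨t, ht.1, ht.2, rfl⟩

lemma seg_im {x y z : ℂ} {t : ℝ} (h : z = x + t • (y - x)) :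
    z.im = (1 - t) * x.im + t * y.im := by
  rw [h]; simp [Complex.add_im, Complex.sub_im, smul_im]; ring

lemma seg_re {x y z : ℂ} {t : ℝ} (h : z = x + t • (y - x)) :
    z.re = (1 - t) * x.re + t * y.re := by
  rw [h]; simp [Complex.add_re, Complex.sub_re, smul_re]; ring

/-! ### The core geometric lemma -/

set_option maxHeartbeats 1000000 in
lemma core (l m : ℕ) (hl : 2 ≤ l) (hm : 2 ≤ m) (p q : ℕ → ℂ)
    (hp0 : p 0 = 0) (hq0 : q 0 = 0) (hE : p l = q m)
    (hpim0 : ∀ i, 1 ≤ i → i ≤ l - 1 → 0 < (p i).im)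
    (hqim0 : ∀ j, 1 ≤ j → j ≤ m - 1 → (q j).im < 0)
    (hA : (p l).im ≤ 0)
    (hqmono : ∀ j, j ≤ m - 1 → (q j).re ≤ (q (m-1)).re)
    (hul : (p (l-1)).re < (p l).re)
    (hvm : (q (m-1)).re < (q m).re)
    (hW : (-(p l).im) * ((p l).re - (p (l-1)).re)
        ≤ ((q m).re - (q (m-1)).re) * ((p (l-1)).im - (p l).im)) :
    (⋃ i : Fin l, segment ℝ (p i.val) (p (i.val+1)))
      ∩ (⋃ j : Fin m, segment ℝ (q j.val) (q (j.val+1))) = {0, p l} := by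
  have ha : 0 < (p (l-1)).im := hpim0 (l-1) (by omega) le_rfl
  have hb : (q (m-1)).im < 0 := hqim0 (m-1) (by omega) le_rfl
  have hqimle : ∀ j, j ≤ m → (q j).im ≤ 0 := by
    intro j hj
    rcases Nat.eq_zero_or_pos j with h0 | h1
    · simp [h0, hq0]
    rcases eq_or_lt_of_le hj with h2 | h2
    · rw [h2, ← hE]; exact hA
    · exact (hqim0 j h1 (by omega)).le
  have hpimge : ∀ i, i ≤ l - 1 → 0 ≤ (p i).im := by
    intro i hi
    rcases Nat.eq_zero_or_pos i with h0 | h1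
    · simp [h0, hp0]
    · exact (hpim0 i h1 hi).le
  have hX : (p l).re = (q m).re := by rw [hE]
  have hXim : (p l).im = (q m).im := by rw [hE]
  ext z
  simp only [Set.mem_inter_iff, Set.mem_iUnion, Set.mem_insert_iff, Set.mem_singleton_iff]
  constructor
  · rintro ⟨⟨i, hzi⟩, ⟨j, hzj⟩⟩
    obtain ⟨s, hs0, hs1, hzs⟩ := mem_seg hzi
    obtain ⟨t, ht0, ht1, hzt⟩ := mem_seg hzj
    have hjv : j.val < m := j.2
    have hiv : i.val < l := i.2
    have him_t : z.im = (1-t) * (q j.val).im + t * (q (j.val+1)).im := seg_im hzt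
    have hre_t : z.re = (1-t) * (q j.val).re + t * (q (j.val+1)).re := seg_re hzt
    have hq1 : (q j.val).im ≤ 0 := hqimle j.val (by omega)
    have hq2 : (q (j.val+1)).im ≤ 0 := hqimle (j.val+1) (by omega)
    have hq1' : (1-t) * (q j.val).im ≤ 0 :=
      mul_nonpos_of_nonneg_of_nonpos (by linarith) hq1
    have hq2' : t * (q (j.val+1)).im ≤ 0 :=
      mul_nonpos_of_nonneg_of_nonpos ht0 hq2
    have him_z_le : z.im ≤ 0 := by linarith
    rcases eq_or_lt_of_le him_z_le with hz0 | hzneg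
    · -- z.im = 0 case
      have e1a : (1-t) * (q j.val).im = 0 := by linarith
      have e1b : t * (q (j.val+1)).im = 0 := by linarith
      rcases Nat.eq_zero_or_pos j.val with hj0 | hjpos
      · by_cases ht : t = 0
        · left; rw [hzt, ht, hj0, hq0]; simp
        · exfalso
          have hq10 : (q (j.val+1)).im = 0 := by
            rcases mul_eq_zero.mp e1b with h | h
            · exact absurd h ht
            · exact h
          rw [hj0] at hq10
          exact absurd hq10 (ne_of_lt (hqim0 1 le_rfl (by omega)))
      · have hqj : (q j.val).im < 0 := hqim0 j.val hjpos (by omega)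
        have ht1' : t = 1 := by
          rcases mul_eq_zero.mp e1a with h | h
          · linarith
          · exact absurd h (ne_of_lt hqj)
        have hqj1 : (q (j.val+1)).im = 0 := by
          rw [ht1'] at e1b; simpa using e1b
        have hjm : j.val + 1 = m := by
          by_contra h
          exact absurd hqj1 (ne_of_lt (hqim0 (j.val+1) (by omega) (by omega)))
        right
        rw [hzt, ht1', one_smul, hjm, ← hE]; ring
    · -- z.im < 0 case
      have him_s : z.im = (1-s) * (p i.val).im + s * (p (i.val+1)).im := seg_im hzs
      have hre_s : z.re = (1-s) * (p i.val).re + s * (p (i.val+1)).re := seg_re hzs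
      have hil : i.val = l - 1 := by
        by_contra h
        have h1 : 0 ≤ (p i.val).im := hpimge i.val (by omega)
        have h2 : 0 ≤ (p (i.val+1)).im := hpimge (i.val+1) (by omega)
        nlinarith [mul_nonneg (by linarith : (0:ℝ) ≤ 1 - s) h1, mul_nonneg hs0 h2]
      rw [hil] at him_s hre_s
      have hl1 : l - 1 + 1 = l := by omega
      rw [hl1] at him_s hre_s
      by_cases hjm : j.val = m - 1
      · -- both on last segments
        rw [hjm] at him_t hre_t
        have hm1 : m - 1 + 1 = m := by omega
        rw [hm1] at him_t hre_t
        by_cases hs' : s = 1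
        · right
          rw [hzs, hs', one_smul, hil, hl1]; ring
        · exfalso
          have hss : 0 < 1 - s := lt_of_le_of_ne (by linarith) (by intro h; exact hs' (by linarith))
          have hu : 0 < (p l).re - (p (l-1)).re := by linarith
          have hv : 0 < (q m).re - (q (m-1)).re := by linarith
          have h1 : (1-s) * ((p l).re - (p (l-1)).re) = (1-t) * ((q m).re - (q (m-1)).re) := by
            linear_combination hre_s - hre_t + hX
          have h2 : (1-s) * ((p l).im - (p (l-1)).im) = (1-t) * ((q m).im - (q (m-1)).im) := by
            linear_combination him_s - him_t + hXim
          have e2 : (1-s) * ((-(p l).im) * ((p l).re - (p (l-1)).re))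
              ≤ (1-s) * (((q m).re - (q (m-1)).re) * ((p (l-1)).im - (p l).im)) :=
            mul_le_mul_of_nonneg_left hW hss.le
          have e3 : (1-s) * ((-(p l).im) * ((p l).re - (p (l-1)).re))
              = (-(p l).im) * ((1-t) * ((q m).re - (q (m-1)).re)) := by
            rw [← h1]; ring
          have e4 : (1-s) * (((q m).re - (q (m-1)).re) * ((p (l-1)).im - (p l).im))
              = -((1-t) * ((q m).im - (q (m-1)).im)) * ((q m).re - (q (m-1)).re) := by
            rw [← h2]; ring
          have e6 : 0 < (1-t) * ((q m).re - (q (m-1)).re) := by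
            rw [← h1]; exact mul_pos hss hu
          have e7 : (-(p l).im) * ((1-t) * ((q m).re - (q (m-1)).re))
              ≤ -((1-t) * ((q m).im - (q (m-1)).im)) * ((q m).re - (q (m-1)).re) := by
            rw [← e3, ← e4]; exact e2
          have e8 : -((1-t) * ((q m).im - (q (m-1)).im)) * ((q m).re - (q (m-1)).re)
              - (-(p l).im) * ((1-t) * ((q m).re - (q (m-1)).re))
              = ((q (m-1)).im) * ((1-t) * ((q m).re - (q (m-1)).re)) := by
            linear_combination ((1-t) * ((q m).re - (q (m-1)).re)) * hXim
          have e5 : 0 ≤ ((q (m-1)).im) * ((1-t) * ((q m).re - (q (m-1)).re)) := by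
            linarith [e7, e8]
          linarith [mul_neg_of_neg_of_pos hb e6, e5]
      · -- j.val ≤ m - 2 : contradiction
        exfalso
        have hj2 : j.val + 1 ≤ m - 1 := by omega
        have q1 := hqmono j.val (by omega)
        have q2 := hqmono (j.val+1) hj2
        have hzre_le : z.re ≤ (q (m-1)).re := by
          nlinarith [mul_le_mul_of_nonneg_left q1 (by linarith : (0:ℝ) ≤ 1 - t),
            mul_le_mul_of_nonneg_left q2 ht0]
        have key : s * ((p l).re - (p (l-1)).re)
            ≤ ((p l).re - (p (l-1)).re) - ((q m).re - (q (m-1)).re) := by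
          linarith [hre_s, hzre_le, hX]
        have haA : 0 < (p (l-1)).im - (p l).im := by linarith
        have hu : 0 < (p l).re - (p (l-1)).re := by linarith
        have step : s * ((p l).re - (p (l-1)).re) * ((p (l-1)).im - (p l).im)
            ≤ ((p l).re - (p (l-1)).re) * (p (l-1)).im := by
          nlinarith [mul_le_mul_of_nonneg_right key haA.le, hW]
        have h7 : 0 ≤ ((p l).re - (p (l-1)).re) * z.im := by
          rw [him_s]; nlinarith [step]
        linarith [h7, mul_pos hu (neg_pos.mpr hzneg)]
  · rintro (rfl | rfl)
    · constructor
      · exact ⟨⟨0, by omega⟩, by simpa [hp0] using left_mem_segment ℝ (p 0) (p 1)⟩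
      · exact ⟨⟨0, by omega⟩, by simpa [hq0] using left_mem_segment ℝ (q 0) (q 1)⟩
    · constructor
      · refine ⟨⟨l-1, by omega⟩, ?_⟩
        have h : l - 1 + 1 = l := by omega
        simpa [h] using right_mem_segment ℝ (p (l-1)) (p l)
      · refine ⟨⟨m-1, by omega⟩, ?_⟩
        have h : m - 1 + 1 = m := by omega
        simpa [h, hE] using right_mem_segment ℝ (q (m-1)) (q m)

/-! ### The mirrored core lemma -/

lemma conj_seg (x y : ℂ) :
    segment ℝ ((starRingEnd ℂ) x) ((starRingEnd ℂ) y)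
      = (fun z : ℂ => (starRingEnd ℂ) z) '' segment ℝ x y := by
  have := image_segment ℝ ((Complex.conjAe.toLinearMap.restrictScalars ℝ).toAffineMap) x y
  simp only [AffineMap.toFun_eq_coe, LinearMap.coe_toAffineMap, LinearMap.coe_restrictScalars,
    AlgEquiv.toLinearMap_apply, Complex.conjAe_coe] at this
  exact this.symm

lemma conj_inj : Function.Injective (fun z : ℂ => (starRingEnd ℂ) z) := by
  intro a b h
  simpa using congrArg (starRingEnd ℂ) h

set_option maxHeartbeats 1000000 in
lemma core' (l m : ℕ) (hl : 2 ≤ l) (hm : 2 ≤ m) (p q : ℕ → ℂ)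
    (hp0 : p 0 = 0) (hq0 : q 0 = 0) (hE : p l = q m)
    (hpim0 : ∀ i, 1 ≤ i → i ≤ l - 1 → 0 < (p i).im)
    (hqim0 : ∀ j, 1 ≤ j → j ≤ m - 1 → (q j).im < 0)
    (hA : 0 ≤ (p l).im)
    (hpmono : ∀ i, i ≤ l - 1 → (p i).re ≤ (p (l-1)).re)
    (hul : (p (l-1)).re < (p l).re)
    (hvm : (q (m-1)).re < (q m).re)
    (hW : (q m).im * ((q m).re - (q (m-1)).re)
        ≤ ((p l).re - (p (l-1)).re) * ((q m).im - (q (m-1)).im)) :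
    (⋃ i : Fin l, segment ℝ (p i.val) (p (i.val+1)))
      ∩ (⋃ j : Fin m, segment ℝ (q j.val) (q (j.val+1))) = {0, p l} := by
  have h := core m l hm hl (fun j => (starRingEnd ℂ) (q j)) (fun i => (starRingEnd ℂ) (p i))
    (by simp [hq0]) (by simp [hp0])
    (by show (starRingEnd ℂ) (q m) = (starRingEnd ℂ) (p l); rw [hE])
    (fun j h1 h2 => by
      simp only [Complex.conj_im]
      linarith [hqim0 j h1 h2])
    (fun i h1 h2 => by
      simp only [Complex.conj_im]
      linarith [hpim0 i h1 h2])
    (by simp only [Complex.conj_im]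
        rw [← hE]
        linarith [hA])
    (fun i hi => by
      simp only [Complex.conj_re]
      exact hpmono i hi)
    (by simp only [Complex.conj_re]; exact hvm)
    (by simp only [Complex.conj_re]; exact hul)
    (by simp only [Complex.conj_re, Complex.conj_im]
        nlinarith [hW])
  beta_reduce at h
  have h1 : (⋃ j : Fin m, segment ℝ ((starRingEnd ℂ) (q j.val)) ((starRingEnd ℂ) (q (j.val+1))))
      = (fun z : ℂ => (starRingEnd ℂ) z) '' (⋃ j : Fin m, segment ℝ (q j.val) (q (j.val+1))) := by
    rw [Set.image_iUnion]
    exact Set.iUnion_congr (fun j => conj_seg _ _)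
  have h2 : (⋃ i : Fin l, segment ℝ ((starRingEnd ℂ) (p i.val)) ((starRingEnd ℂ) (p (i.val+1))))
      = (fun z : ℂ => (starRingEnd ℂ) z) '' (⋃ i : Fin l, segment ℝ (p i.val) (p (i.val+1))) := by
    rw [Set.image_iUnion]
    exact Set.iUnion_congr (fun i => conj_seg _ _)
  rw [h1, h2, ← Set.image_inter conj_inj] at h
  have h3 : ({0, (starRingEnd ℂ) (q m)} : Set ℂ)
      = (fun z : ℂ => (starRingEnd ℂ) z) '' {0, q m} := by
    rw [Set.image_insert_eq, Set.image_singleton]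
    simp
  rw [h3] at h
  have h4 := (Set.image_eq_image conj_inj).mp h
  rw [Set.inter_comm] at h4
  rw [hE]
  exact h4

/-! ### Combinatorial shift construction -/

lemma opp_pair {n : ℕ} (σ : Fin n → Fin n) (hinv : ∀ i, σ (σ i) = i)
    (w : Fin n → ℝ) (hw : ∀ i, 0 < w i) (hwσ : ∀ i, w (σ i) = w i)
    (A : Finset (Fin n)) (hbal : ∑ i ∈ A, w i = ∑ i ∈ Aᶜ, w i)
    (e : Fin n) (he : e ∉ A) (hσe : σ e ∉ A) :
    ∃ i, i ∈ A ∧ σ i ∈ A := by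
  by_contra hc
  push_neg at hc
  have hinj : Function.Injective σ := Function.LeftInverse.injective hinv
  have himg : Finset.image σ A ⊆ Aᶜ \ {e, σ e} := by
    intro x hx
    simp only [Finset.mem_image] at hx
    obtain ⟨i, hi, rfl⟩ := hx
    simp only [Finset.mem_sdiff, Finset.mem_compl, Finset.mem_insert, Finset.mem_singleton]
    refine ⟨hc i hi, ?_⟩
    rintro (h | h)
    · apply hσe
      have : i = σ e := by rw [← h, hinv]
      rwa [this] at hi
    · apply he
      rwa [hinj h] at hi
  have h1 : ∑ i ∈ A, w i = ∑ x ∈ Finset.image σ A, w x := by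
    rw [Finset.sum_image (fun a _ b _ h => hinj h)]
    exact (Finset.sum_congr rfl (fun i _ => hwσ i)).symm
  have h2 : ∑ x ∈ Finset.image σ A, w x ≤ ∑ x ∈ Aᶜ \ {e, σ e}, w x :=
    Finset.sum_le_sum_of_subset_of_nonneg himg (fun i _ _ => (hw i).le)
  have h3 : ∑ x ∈ Aᶜ \ {e, σ e}, w x < ∑ x ∈ Aᶜ, w x := by
    apply Finset.sum_lt_sum_of_subset (Finset.sdiff_subset) (i := e)
    · simpa using he
    · simp
    · exact hw e
    · exact fun j _ _ => (hw j).le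
  linarith

section
variable {n : ℕ}

/-- indicator function -/
noncomputable def indF (x : Fin n) (T : ℝ) : Fin n → ℝ := fun i => if i = x then T else 0

lemma indF_nonneg (x : Fin n) {T : ℝ} (hT : 0 ≤ T) (i : Fin n) : 0 ≤ indF x T i := by
  unfold indF; split_ifs <;> simp [hT]

lemma indF_le (x : Fin n) {T : ℝ} (hT : 0 ≤ T) (i : Fin n) : indF x T i ≤ T := by
  unfold indF; split_ifs <;> simp [hT]

lemma indF_self (x : Fin n) (T : ℝ) : indF x T x = T := by simp [indF]

lemma indF_ne (x : Fin n) (T : ℝ) {i : Fin n} (h : i ≠ x) : indF x T i = 0 := by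
  simp [indF, h]

lemma indF_sum (x : Fin n) (T : ℝ) (F : Finset (Fin n)) :
    ∑ i ∈ F, indF x T i = if x ∈ F then T else 0 :=
  Finset.sum_ite_eq' F x (fun _ => T)

lemma indF_sigma (σ : Fin n → Fin n) (hinv : ∀ i, σ (σ i) = i) (x : Fin n) (T : ℝ) (i : Fin n) :
    indF x T (σ i) = indF (σ x) T i := by
  unfold indF
  apply if_congr _ rfl rfl
  constructor
  · rintro h; rw [← h, hinv]
  · rintro rfl; rw [hinv]

end

lemma exists_shift (l m : ℕ) (σ : Fin (l+m) → Fin (l+m)) (hinv : ∀ i, σ (σ i) = i)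
    (hfix : ∀ i, σ i ≠ i) (ζ : Fin (l+m) → ℂ)
    (hre : ∀ i, 0 < (ζ i).re) (hwσ : ∀ i, (ζ (σ i)).re = (ζ i).re)
    (hbal : ∑ i ∈ Finset.univ.filter (fun i : Fin (l+m) => (i:ℕ) < l), (ζ i).re
          = ∑ i ∈ Finset.univ.filter (fun i : Fin (l+m) => ¬(i:ℕ) < l), (ζ i).re)
    (e : Fin (l+m)) (T : ℝ) (hT : 0 ≤ T) :
    ∃ d : Fin (l+m) → ℝ, (∀ i, d (σ i) = d i) ∧ (∀ i, 0 ≤ d i) ∧ (∀ i, d i ≤ T) ∧ d e = T ∧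
      ∑ i ∈ Finset.univ.filter (fun i : Fin (l+m) => (i:ℕ) < l), d i
        = ∑ i ∈ Finset.univ.filter (fun i : Fin (l+m) => ¬(i:ℕ) < l), d i := by
  classical
  set Top := Finset.univ.filter (fun i : Fin (l+m) => (i:ℕ) < l) with hTop
  set Bot := Finset.univ.filter (fun i : Fin (l+m) => ¬(i:ℕ) < l) with hBot
  have hmemT : ∀ i : Fin (l+m), i ∈ Top ↔ (i:ℕ) < l := by
    intro i; simp [hTop]
  have hmemB : ∀ i : Fin (l+m), i ∈ Bot ↔ ¬(i:ℕ) < l := by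
    intro i; simp [hBot]
  have hcT : Topᶜ = Bot := by
    ext i; simp [hTop, hBot]
  have hcB : Botᶜ = Top := by
    ext i; simp [hTop, hBot]
  have hσe_ne : e ≠ σ e := fun h => hfix e h.symm
  by_cases hside : ((e:ℕ) < l) ↔ ¬((σ e : ℕ) < l)
  · -- cross pair : d supported on {e, σ e}
    refine ⟨fun i => indF e T i + indF (σ e) T i, ?_, ?_, ?_, ?_, ?_⟩
    · intro i
      beta_reduce
      rw [indF_sigma σ hinv, indF_sigma σ hinv, hinv]
      exact add_comm _ _
    · intro i
      exact add_nonneg (indF_nonneg _ hT _) (indF_nonneg _ hT _)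
    · intro i
      beta_reduce
      by_cases h1 : i = e
      · rw [h1, indF_self, indF_ne _ _ hσe_ne]; linarith
      · rw [indF_ne _ _ h1]
        have := indF_le (σ e) hT i
        linarith [indF_nonneg (σ e) hT i]
    · beta_reduce
      rw [indF_self, indF_ne _ _ hσe_ne]; ring
    · rw [Finset.sum_add_distrib, Finset.sum_add_distrib, indF_sum, indF_sum, indF_sum, indF_sum]
      by_cases h : (e:ℕ) < l
      · have h2 : ¬ ((σ e : ℕ) < l) := hside.mp h
        simp [hmemT, hmemB, h, h2]
      · have h2 : ((σ e : ℕ) < l) := by tauto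
        simp [hmemT, hmemB, h, h2]
  · -- same side
    have hss : ((e:ℕ) < l) ↔ ((σ e : ℕ) < l) := by tauto
    by_cases hel : (e:ℕ) < l
    · -- e, σ e in Top; find pair in Bot
      obtain ⟨i0, hi0, hσi0⟩ := opp_pair σ hinv (fun i => (ζ i).re) hre hwσ Bot
        (by rw [hcB]; exact hbal.symm)
        e (by rw [hmemB]; tauto) (by rw [hmemB]; push_neg; exact hss.mp hel)
      rw [hmemB] at hi0 hσi0
      have hi0_ne : i0 ≠ σ i0 := fun h => hfix i0 h.symm
      have d1 : e ≠ i0 := fun h => hi0 (h ▸ hel)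
      have d2 : e ≠ σ i0 := fun h => hσi0 (h ▸ hel)
      have hσel : (σ e : ℕ) < l := hss.mp hel
      have d3 : σ e ≠ i0 := fun h => hi0 (h ▸ hσel)
      have d4 : σ e ≠ σ i0 := fun h => hσi0 (h ▸ hσel)
      refine ⟨fun i => (indF e T i + indF (σ e) T i) + (indF i0 T i + indF (σ i0) T i),
        ?_, ?_, ?_, ?_, ?_⟩
      · intro i
        beta_reduce
        rw [indF_sigma σ hinv, indF_sigma σ hinv, indF_sigma σ hinv, indF_sigma σ hinv,
          hinv, hinv]
        ring
      · intro i
        beta_reduce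
        have := indF_nonneg e hT i; have := indF_nonneg (σ e) hT i
        have := indF_nonneg i0 hT i; have := indF_nonneg (σ i0) hT i
        linarith
      · intro i
        beta_reduce
        by_cases h1 : i = e
        · rw [h1, indF_self, indF_ne _ _ hσe_ne, indF_ne _ _ d1, indF_ne _ _ d2]; linarith
        · rw [indF_ne _ _ h1]
          by_cases h2 : i = σ e
          · rw [h2, indF_self, indF_ne _ _ (h2 ▸ d3 : σ e ≠ i0), indF_ne _ _ d4]; linarith
          · rw [indF_ne _ _ h2]
            by_cases h3 : i = i0
            · rw [h3, indF_self, indF_ne _ _ hi0_ne]; linarith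
            · rw [indF_ne _ _ h3]
              have := indF_le (σ i0) hT i
              linarith [indF_nonneg (σ i0) hT i]
      · beta_reduce
        rw [indF_self, indF_ne _ _ hσe_ne, indF_ne _ _ d1, indF_ne _ _ d2]; ring
      · rw [Finset.sum_add_distrib, Finset.sum_add_distrib, Finset.sum_add_distrib,
          Finset.sum_add_distrib, Finset.sum_add_distrib, Finset.sum_add_distrib,
          indF_sum, indF_sum, indF_sum, indF_sum, indF_sum, indF_sum, indF_sum, indF_sum]
        have bi0 : ¬ (i0:ℕ) < l := hi0
        have bσi0 : ¬ (σ i0:ℕ) < l := hσi0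
        simp [hmemT, hmemB, hel, hσel, bi0, bσi0]
    · -- e, σ e in Bot; find pair in Top
      obtain ⟨i0, hi0, hσi0⟩ := opp_pair σ hinv (fun i => (ζ i).re) hre hwσ Top
        (by rw [hcT]; exact hbal)
        e (by rw [hmemT]; exact hel) (by rw [hmemT]; exact fun h => hel (hss.mpr h))
      rw [hmemT] at hi0 hσi0
      have hi0_ne : i0 ≠ σ i0 := fun h => hfix i0 h.symm
      have hσel : ¬ (σ e : ℕ) < l := fun h => hel (hss.mpr h)
      have d1 : e ≠ i0 := fun h => hel (h ▸ hi0)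
      have d2 : e ≠ σ i0 := fun h => hel (h ▸ hσi0)
      have d3 : σ e ≠ i0 := fun h => hσel (h ▸ hi0)
      have d4 : σ e ≠ σ i0 := fun h => hσel (h ▸ hσi0)
      refine ⟨fun i => (indF e T i + indF (σ e) T i) + (indF i0 T i + indF (σ i0) T i),
        ?_, ?_, ?_, ?_, ?_⟩
      · intro i
        beta_reduce
        rw [indF_sigma σ hinv, indF_sigma σ hinv, indF_sigma σ hinv, indF_sigma σ hinv,
          hinv, hinv]
        ring
      · intro i
        beta_reduce
        have := indF_nonneg e hT i; have := indF_nonneg (σ e) hT i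
        have := indF_nonneg i0 hT i; have := indF_nonneg (σ i0) hT i
        linarith
      · intro i
        beta_reduce
        by_cases h1 : i = e
        · rw [h1, indF_self, indF_ne _ _ hσe_ne, indF_ne _ _ d1, indF_ne _ _ d2]; linarith
        · rw [indF_ne _ _ h1]
          by_cases h2 : i = σ e
          · rw [h2, indF_self, indF_ne _ _ (h2 ▸ d3 : σ e ≠ i0), indF_ne _ _ d4]; linarith
          · rw [indF_ne _ _ h2]
            by_cases h3 : i = i0
            · rw [h3, indF_self, indF_ne _ _ hi0_ne]; linarith
            · rw [indF_ne _ _ h3]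
              have := indF_le (σ i0) hT i
              linarith [indF_nonneg (σ i0) hT i]
      · beta_reduce
        rw [indF_self, indF_ne _ _ hσe_ne, indF_ne _ _ d1, indF_ne _ _ d2]; ring
      · rw [Finset.sum_add_distrib, Finset.sum_add_distrib, Finset.sum_add_distrib,
          Finset.sum_add_distrib, Finset.sum_add_distrib, Finset.sum_add_distrib,
          indF_sum, indF_sum, indF_sum, indF_sum, indF_sum, indF_sum, indF_sum, indF_sum]
        simp [hmemT, hmemB, hel, hσel, hi0, hσi0]

/-! ### pad helpers -/

lemma pad_lt {n : ℕ} (ζ : Fin n → ℂ) {k : ℕ} (h : k < n) : pad ζ k = ζ ⟨k, h⟩ := dif_pos h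

lemma pad_re {n : ℕ} (ζ : Fin n → ℂ) (k : ℕ) :
    (pad ζ k).re = padd (fun i => (ζ i).re) k := by
  unfold pad padd; split <;> simp

lemma pad_re_nonneg {n : ℕ} (ζ : Fin n → ℂ) (h : ∀ i, 0 < (ζ i).re) (k : ℕ) :
    0 ≤ (pad ζ k).re := by
  unfold pad; split
  · exact (h _).le
  · simp

lemma pad_add_ofReal {n : ℕ} (ζ : Fin n → ℂ) (d : Fin n → ℝ) (k : ℕ) :
    pad (fun i => ζ i + (d i : ℂ)) k = pad ζ k + ((padd d k : ℝ) : ℂ) := by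
  unfold pad padd; split <;> simp

-- partial sums of a shifted tuple have the same imaginary parts
lemma sum_pad_shift_im {n : ℕ} (ζ : Fin n → ℂ) (d : Fin n → ℝ) (c : ℕ → ℕ) (j : ℕ) :
    (∑ k ∈ range j, pad (fun i => ζ i + (d i : ℂ)) (c k)).im
      = (∑ k ∈ range j, pad ζ (c k)).im := by
  rw [Finset.sum_congr rfl (fun k _ => pad_add_ofReal ζ d (c k)), Finset.sum_add_distrib]
  rw [Complex.add_im]
  have : (∑ k ∈ range j, ((padd d (c k) : ℝ) : ℂ)).im = 0 := by
    rw [← Complex.ofReal_sum]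
    simp
  rw [this, add_zero]

lemma sum_pad_shift_re {n : ℕ} (ζ : Fin n → ℂ) (d : Fin n → ℝ) (c : ℕ → ℕ) (j : ℕ) :
    (∑ k ∈ range j, pad (fun i => ζ i + (d i : ℂ)) (c k))
      = (∑ k ∈ range j, pad ζ (c k)) + ((∑ k ∈ range j, padd d (c k) : ℝ) : ℂ) := by
  rw [Finset.sum_congr rfl (fun k _ => pad_add_ofReal ζ d (c k)), Finset.sum_add_distrib,
    Complex.ofReal_sum]

-- monotonicity of real parts of partial sums
lemma re_sum_mono {n : ℕ} (ζ : Fin n → ℂ) (hre : ∀ i, 0 < (ζ i).re) (c : ℕ → ℕ)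
    {j j' : ℕ} (h : j ≤ j') :
    (∑ k ∈ range j, pad ζ (c k)).re ≤ (∑ k ∈ range j', pad ζ (c k)).re := by
  rw [Complex.re_sum, Complex.re_sum]
  exact Finset.sum_le_sum_of_subset_of_nonneg (Finset.range_subset_range.mpr h)
    (fun k _ _ => pad_re_nonneg ζ hre (c k))

-- l and m are at least 2 whenever the suspension set is nonempty
lemma two_le_l_and_m (l m : ℕ) (hl : 1 ≤ l) (hm : 1 ≤ m) (hlm : 3 ≤ l + m)
    (σ : Fin (l + m) → Fin (l + m)) (hinv : ∀ i, σ (σ i) = i) (hfix : ∀ i, σ i ≠ i)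
    (ζ : Fin (l + m) → ℂ) (hζ : ζ ∈ suspensionSet l m σ) : 2 ≤ l ∧ 2 ≤ m := by
  obtain ⟨hσ, hre, _, _, hbal⟩ := hζ
  have hbal_re : ∑ k ∈ range l, (pad ζ k).re = ∑ k ∈ range m, (pad ζ (l + k)).re := by
    have h0 := congrArg Complex.re hbal
    rwa [Complex.re_sum, Complex.re_sum] at h0
  have hpos : ∀ k, k < l + m → 0 < (pad ζ k).re := by
    intro k h; rw [pad_lt ζ h]; exact hre _
  constructor
  · by_contra hc
    have hl1 : l = 1 := by omega
    subst hl1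
    have hm2 : 2 ≤ m := by omega
    have hcne : σ ⟨0, by omega⟩ ≠ ⟨0, by omega⟩ := hfix _
    have hcval : 1 ≤ (σ ⟨0, by omega⟩ : Fin (1+m)).val := by
      rcases Nat.eq_zero_or_pos (σ ⟨0, by omega⟩ : Fin (1+m)).val with h | h
      · exact absurd (Fin.ext h) hcne
      · exact h
    have hcval2 : (σ ⟨0, by omega⟩ : Fin (1+m)).val < 1 + m := (σ ⟨0, by omega⟩).2
    obtain ⟨k0, hk0⟩ : ∃ k0, (σ ⟨0, by omega⟩ : Fin (1+m)).val = 1 + k0 :=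
      ⟨(σ ⟨0, by omega⟩ : Fin (1+m)).val - 1, by omega⟩
    have hk0m : k0 < m := by omega
    have hterm : (pad ζ (1 + k0)).re = (ζ ⟨0, by omega⟩).re := by
      rw [pad_lt ζ (by omega : 1 + k0 < 1 + m)]
      have h1 : (⟨1 + k0, by omega⟩ : Fin (1 + m)) = σ ⟨0, by omega⟩ := Fin.ext hk0.symm
      rw [h1, ← hσ]
    have hLHS : ∑ k ∈ range 1, (pad ζ k).re = (ζ ⟨0, by omega⟩).re := by
      rw [Finset.sum_range_one, pad_lt ζ (by omega : 0 < 1 + m)]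
    have hk1 : ∃ k1, k1 < m ∧ k1 ≠ k0 := by
      rcases Nat.eq_zero_or_pos k0 with h | h
      · exact ⟨1, by omega, by omega⟩
      · exact ⟨0, by omega, by omega⟩
    obtain ⟨k1, hk1m, hk1ne⟩ := hk1
    have hlt : (pad ζ (1 + k0)).re < ∑ k ∈ range m, (pad ζ (1 + k)).re := by
      apply Finset.single_lt_sum (f := fun k => (pad ζ (1 + k)).re) hk1ne
        (Finset.mem_range.mpr hk0m) (Finset.mem_range.mpr hk1m) (hpos _ (by omega))
      intro k hk _
      exact (hpos _ (by simp at hk; omega)).le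
    rw [hbal_re, ← hterm] at hLHS
    linarith
  · by_contra hc
    have hm1 : m = 1 := by omega
    subst hm1
    have hl2 : 2 ≤ l := by omega
    have hcne : σ ⟨l, by omega⟩ ≠ ⟨l, by omega⟩ := hfix _
    have hcval2 : (σ ⟨l, by omega⟩ : Fin (l+1)).val < l + 1 := (σ ⟨l, by omega⟩).2
    have hcval : (σ ⟨l, by omega⟩ : Fin (l+1)).val < l := by
      by_contra h
      have h2 : (σ ⟨l, by omega⟩ : Fin (l+1)).val = l := by omega
      exact hcne (Fin.ext h2)
    obtain ⟨k0, hk0⟩ : ∃ k0, (σ ⟨l, by omega⟩ : Fin (l+1)).val = k0 := ⟨_, rfl⟩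
    have hk0l : k0 < l := by omega
    have hterm : (pad ζ k0).re = (ζ ⟨l, by omega⟩).re := by
      rw [pad_lt ζ (by omega : k0 < l + 1)]
      have h1 : (⟨k0, by omega⟩ : Fin (l + 1)) = σ ⟨l, by omega⟩ := Fin.ext hk0.symm
      rw [h1, ← hσ]
    have hRHS : ∑ k ∈ range 1, (pad ζ (l + k)).re = (ζ ⟨l, by omega⟩).re := by
      rw [Finset.sum_range_one, add_zero, pad_lt ζ (by omega : l < l + 1)]
    have hk1 : ∃ k1, k1 < l ∧ k1 ≠ k0 := by
      rcases Nat.eq_zero_or_pos k0 with h | h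
      · exact ⟨1, by omega, by omega⟩
      · exact ⟨0, by omega, by omega⟩
    obtain ⟨k1, hk1m, hk1ne⟩ := hk1
    have hlt : (pad ζ k0).re < ∑ k ∈ range l, (pad ζ k).re := by
      apply Finset.single_lt_sum (f := fun k => (pad ζ k).re) hk1ne
        (Finset.mem_range.mpr hk0l) (Finset.mem_range.mpr hk1m) (hpos _ (by omega))
      intro k hk _
      exact (hpos _ (by simp at hk; omega)).le
    rw [← hbal_re, ← hterm] at hRHS
    linarith

/-! ### Membership of shifted data -/

lemma shifted_mem (l m : ℕ) (σ : Fin (l+m) → Fin (l+m))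
    (ζ : Fin (l+m) → ℂ) (hζ : ζ ∈ suspensionSet l m σ)
    (d : Fin (l+m) → ℝ) (hdσ : ∀ i, d (σ i) = d i) (hd0 : ∀ i, 0 ≤ d i)
    (hdbal : ∑ i ∈ Finset.univ.filter (fun i : Fin (l+m) => (i:ℕ) < l), d i
        = ∑ i ∈ Finset.univ.filter (fun i : Fin (l+m) => ¬(i:ℕ) < l), d i) :
    (fun i => ζ i + (d i : ℂ)) ∈ suspensionSet l m σ := by
  obtain ⟨hσ, hre, him3, him4, hbal⟩ := hζ
  refine ⟨?_, ?_, ?_, ?_, ?_⟩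
  · intro i
    simp only
    rw [hσ i, hdσ i]
  · intro i
    simp only [Complex.add_re, Complex.ofReal_re]
    linarith [hre i, hd0 i]
  · intro i h1 h2
    have E := sum_pad_shift_im ζ d (fun k => k) i
    beta_reduce at E
    rw [E]
    exact him3 i h1 h2
  · intro j h1 h2
    have E := sum_pad_shift_im ζ d (fun k => l + k) j
    beta_reduce at E
    rw [E]
    exact him4 j h1 h2
  · have E1 := sum_pad_shift_re ζ d (fun k => k) l
    have E2 := sum_pad_shift_re ζ d (fun k => l + k) m
    beta_reduce at E1 E2
    rw [E1, E2, hbal]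
    have : (∑ k ∈ range l, padd d k) = (∑ k ∈ range m, padd d (l+k)) := by
      rw [← sum_top_filter l m d, ← sum_bot_filter l m d]
      exact hdbal
    rw [this]

/-! ### The main theorem -/

set_option maxHeartbeats 1000000 in
/-- For every suspension datum `ζ ∈ Q_{σ,l}` there is a suspension datum `ζ'` with the
same imaginary parts that defines a suitable polygon. -/
theorem exists_suitable_polygon_same_im (l m : ℕ) (hl : 1 ≤ l) (hm : 1 ≤ m)
    (hlm : 3 ≤ l + m) (σ : Fin (l + m) → Fin (l + m))
    (hinv : ∀ i, σ (σ i) = i) (hfix : ∀ i, σ i ≠ i)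
    (ζ : Fin (l + m) → ℂ) (hζ : ζ ∈ suspensionSet l m σ) :
    ∃ ζ' ∈ suspensionSet l m σ,
      (∀ i, (ζ' i).im = (ζ i).im) ∧ definesSuitablePolygon l m ζ' := by
  obtain ⟨hl2, hm2⟩ := two_le_l_and_m l m hl hm hlm σ hinv hfix ζ hζ
  have hζmem := hζ
  obtain ⟨hσ, hre, him3, him4, hbal⟩ := hζ
  have hwσ : ∀ i, (ζ (σ i)).re = (ζ i).re := fun i => by rw [← hσ i]
  have hbal_filter : ∑ i ∈ Finset.univ.filter (fun i : Fin (l+m) => (i:ℕ) < l), (ζ i).re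
      = ∑ i ∈ Finset.univ.filter (fun i : Fin (l+m) => ¬(i:ℕ) < l), (ζ i).re := by
    have h0 := congrArg Complex.re hbal
    rw [Complex.re_sum, Complex.re_sum] at h0
    rw [sum_top_filter, sum_bot_filter]
    calc ∑ k ∈ range l, padd (fun i => (ζ i).re) k
        = ∑ k ∈ range l, (pad ζ k).re :=
          Finset.sum_congr rfl (fun k _ => (pad_re ζ k).symm)
      _ = ∑ k ∈ range m, (pad ζ (l+k)).re := h0
      _ = ∑ k ∈ range m, padd (fun i => (ζ i).re) (l+k) :=
          Finset.sum_congr rfl (fun k _ => pad_re ζ (l+k))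
  have haζ : 0 < (∑ k ∈ range (l-1), pad ζ k).im := him3 (l-1) (by omega) le_rfl
  have hbζ : (∑ k ∈ range (m-1), pad ζ (l+k)).im < 0 := him4 (m-1) (by omega) le_rfl
  have hQmAim : (∑ k ∈ range m, pad ζ (l+k)).im = (∑ k ∈ range l, pad ζ k).im := by
    rw [← hbal]
  rcases le_or_gt (∑ k ∈ range l, pad ζ k).im 0 with hAneg | hApos
  · -- Case Im E ≤ 0 : enlarge the last bottom side
    have hr1pos : 0 < (ζ ⟨l-1, by omega⟩).re := hre _
    have hT0 : 0 ≤ (-(∑ k ∈ range l, pad ζ k).im) * (ζ ⟨l-1, by omega⟩).re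
        / (∑ k ∈ range (l-1), pad ζ k).im := by
      apply div_nonneg _ haζ.le
      nlinarith
    obtain ⟨d, hdσ, hd0, hdT, hde, hdbal⟩ :=
      exists_shift l m σ hinv hfix ζ hre hwσ hbal_filter ⟨l + (m-1), by omega⟩
        ((-(∑ k ∈ range l, pad ζ k).im) * (ζ ⟨l-1, by omega⟩).re
          / (∑ k ∈ range (l-1), pad ζ k).im) hT0
    have hmem := shifted_mem l m σ ζ hζmem d hdσ hd0 hdbal
    refine ⟨fun i => ζ i + (d i : ℂ), hmem, fun i => by simp, ?_⟩
    obtain ⟨hσ', hre', him3', him4', hbal'⟩ := hmem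
    -- abbreviations for this block
    have E1 : (∑ k ∈ range l, pad (fun i => ζ i + (d i : ℂ)) k).im
        = (∑ k ∈ range l, pad ζ k).im := by
      have E := sum_pad_shift_im ζ d (fun k => k) l
      beta_reduce at E; exact E
    have E2 : (∑ k ∈ range (l-1), pad (fun i => ζ i + (d i : ℂ)) k).im
        = (∑ k ∈ range (l-1), pad ζ k).im := by
      have E := sum_pad_shift_im ζ d (fun k => k) (l-1)
      beta_reduce at E; exact E
    have etop : ∑ k ∈ range l, pad (fun i => ζ i + (d i : ℂ)) k
        = ∑ k ∈ range (l-1), pad (fun i => ζ i + (d i : ℂ)) k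
          + pad (fun i => ζ i + (d i : ℂ)) (l-1) := by
      have e := Finset.sum_range_succ (fun k => pad (fun i => ζ i + (d i : ℂ)) k) (l-1)
      rw [show l-1+1 = l from by omega] at e
      exact e
    have ebot : ∑ k ∈ range m, pad (fun i => ζ i + (d i : ℂ)) (l+k)
        = ∑ k ∈ range (m-1), pad (fun i => ζ i + (d i : ℂ)) (l+k)
          + pad (fun i => ζ i + (d i : ℂ)) (l+(m-1)) := by
      have e := Finset.sum_range_succ (fun k => pad (fun i => ζ i + (d i : ℂ)) (l+k)) (m-1)
      rw [show m-1+1 = m from by omega] at e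
      exact e
    have hpadtop : (pad (fun i => ζ i + (d i : ℂ)) (l-1)).re
        = (ζ ⟨l-1, by omega⟩).re + d ⟨l-1, by omega⟩ := by
      rw [pad_lt _ (show l-1 < l+m by omega)]
      simp
    have hpadbot : (pad (fun i => ζ i + (d i : ℂ)) (l+(m-1))).re
        = (ζ ⟨l+(m-1), by omega⟩).re
          + (-(∑ k ∈ range l, pad ζ k).im) * (ζ ⟨l-1, by omega⟩).re
            / (∑ k ∈ range (l-1), pad ζ k).im := by
      rw [pad_lt _ (show l+(m-1) < l+m by omega)]
      show (ζ _ + ((d _ : ℝ) : ℂ)).re = _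
      rw [Complex.add_re, Complex.ofReal_re, hde]
    have Hul : (∑ k ∈ range (l-1), pad (fun i => ζ i + (d i : ℂ)) k).re
        < (∑ k ∈ range l, pad (fun i => ζ i + (d i : ℂ)) k).re := by
      have := congrArg Complex.re etop
      rw [Complex.add_re] at this
      rw [this, hpadtop]
      have := hd0 ⟨l-1, by omega⟩
      linarith
    have Hvm : (∑ k ∈ range (m-1), pad (fun i => ζ i + (d i : ℂ)) (l+k)).re
        < (∑ k ∈ range m, pad (fun i => ζ i + (d i : ℂ)) (l+k)).re := by
      have := congrArg Complex.re ebot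
      rw [Complex.add_re] at this
      rw [this, hpadbot]
      have := hre ⟨l+(m-1), by omega⟩
      linarith
    have HW : (-(∑ k ∈ range l, pad (fun i => ζ i + (d i : ℂ)) k).im)
          * ((∑ k ∈ range l, pad (fun i => ζ i + (d i : ℂ)) k).re
            - (∑ k ∈ range (l-1), pad (fun i => ζ i + (d i : ℂ)) k).re)
        ≤ ((∑ k ∈ range m, pad (fun i => ζ i + (d i : ℂ)) (l+k)).re
            - (∑ k ∈ range (m-1), pad (fun i => ζ i + (d i : ℂ)) (l+k)).re)
          * ((∑ k ∈ range (l-1), pad (fun i => ζ i + (d i : ℂ)) k).im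
            - (∑ k ∈ range l, pad (fun i => ζ i + (d i : ℂ)) k).im) := by
      have eu : (∑ k ∈ range l, pad (fun i => ζ i + (d i : ℂ)) k).re
          - (∑ k ∈ range (l-1), pad (fun i => ζ i + (d i : ℂ)) k).re
          = (ζ ⟨l-1, by omega⟩).re + d ⟨l-1, by omega⟩ := by
        have := congrArg Complex.re etop
        rw [Complex.add_re] at this
        rw [this, hpadtop]; ring
      have ev : (∑ k ∈ range m, pad (fun i => ζ i + (d i : ℂ)) (l+k)).re
          - (∑ k ∈ range (m-1), pad (fun i => ζ i + (d i : ℂ)) (l+k)).re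
          = (ζ ⟨l+(m-1), by omega⟩).re
            + (-(∑ k ∈ range l, pad ζ k).im) * (ζ ⟨l-1, by omega⟩).re
              / (∑ k ∈ range (l-1), pad ζ k).im := by
        have := congrArg Complex.re ebot
        rw [Complex.add_re] at this
        rw [this, hpadbot]; ring
      rw [E1, E2, eu, ev]
      have hTa : (-(∑ k ∈ range l, pad ζ k).im) * (ζ ⟨l-1, by omega⟩).re
            / (∑ k ∈ range (l-1), pad ζ k).im * (∑ k ∈ range (l-1), pad ζ k).im
          = (-(∑ k ∈ range l, pad ζ k).im) * (ζ ⟨l-1, by omega⟩).re :=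
        div_mul_cancel₀ _ (ne_of_gt haζ)
      have hd1 := hdT ⟨l-1, by omega⟩
      have hd1' := hd0 ⟨l-1, by omega⟩
      have hrepos := hre ⟨l+(m-1), by omega⟩
      nlinarith [mul_nonneg (neg_nonneg.mpr hAneg) (sub_nonneg.mpr hd1),
        mul_pos hrepos haζ,
        mul_nonneg hrepos.le (neg_nonneg.mpr hAneg),
        mul_nonneg hT0 (neg_nonneg.mpr hAneg),
        hTa]
    have hcore := core l m hl2 hm2
      (fun i => ∑ k ∈ range i, pad (fun i => ζ i + (d i : ℂ)) k)
      (fun j => ∑ k ∈ range j, pad (fun i => ζ i + (d i : ℂ)) (l+k))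
      (by simp) (by simp) hbal' him3' him4'
      (by beta_reduce; rw [E1]; exact hAneg)
      (fun j hj => re_sum_mono (fun i => ζ i + (d i : ℂ)) hre' (fun k => l + k) hj)
      Hul Hvm HW
    exact hcore
  · -- Case Im E > 0 : enlarge the last top side
    have hr2pos : 0 < (ζ ⟨l+(m-1), by omega⟩).re := hre _
    have hT0 : 0 ≤ (∑ k ∈ range l, pad ζ k).im * (ζ ⟨l+(m-1), by omega⟩).re
        / (-(∑ k ∈ range (m-1), pad ζ (l+k)).im) := by
      apply div_nonneg _ (by linarith)
      nlinarith
    obtain ⟨d, hdσ, hd0, hdT, hde, hdbal⟩ :=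
      exists_shift l m σ hinv hfix ζ hre hwσ hbal_filter ⟨l-1, by omega⟩
        ((∑ k ∈ range l, pad ζ k).im * (ζ ⟨l+(m-1), by omega⟩).re
          / (-(∑ k ∈ range (m-1), pad ζ (l+k)).im)) hT0
    have hmem := shifted_mem l m σ ζ hζmem d hdσ hd0 hdbal
    refine ⟨fun i => ζ i + (d i : ℂ), hmem, fun i => by simp, ?_⟩
    obtain ⟨hσ', hre', him3', him4', hbal'⟩ := hmem
    have E1 : (∑ k ∈ range l, pad (fun i => ζ i + (d i : ℂ)) k).im
        = (∑ k ∈ range l, pad ζ k).im := by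
      have E := sum_pad_shift_im ζ d (fun k => k) l
      beta_reduce at E; exact E
    have E5 : (∑ k ∈ range (m-1), pad (fun i => ζ i + (d i : ℂ)) (l+k)).im
        = (∑ k ∈ range (m-1), pad ζ (l+k)).im := by
      have E := sum_pad_shift_im ζ d (fun k => l + k) (m-1)
      beta_reduce at E; exact E
    have EQm : (∑ k ∈ range m, pad (fun i => ζ i + (d i : ℂ)) (l+k)).im
        = (∑ k ∈ range l, pad ζ k).im := by
      have h := congrArg Complex.im hbal'
      rw [← h]
      exact E1
    have etop : ∑ k ∈ range l, pad (fun i => ζ i + (d i : ℂ)) k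
        = ∑ k ∈ range (l-1), pad (fun i => ζ i + (d i : ℂ)) k
          + pad (fun i => ζ i + (d i : ℂ)) (l-1) := by
      have e := Finset.sum_range_succ (fun k => pad (fun i => ζ i + (d i : ℂ)) k) (l-1)
      rw [show l-1+1 = l from by omega] at e
      exact e
    have ebot : ∑ k ∈ range m, pad (fun i => ζ i + (d i : ℂ)) (l+k)
        = ∑ k ∈ range (m-1), pad (fun i => ζ i + (d i : ℂ)) (l+k)
          + pad (fun i => ζ i + (d i : ℂ)) (l+(m-1)) := by
      have e := Finset.sum_range_succ (fun k => pad (fun i => ζ i + (d i : ℂ)) (l+k)) (m-1)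
      rw [show m-1+1 = m from by omega] at e
      exact e
    have hpadtop : (pad (fun i => ζ i + (d i : ℂ)) (l-1)).re
        = (ζ ⟨l-1, by omega⟩).re
          + (∑ k ∈ range l, pad ζ k).im * (ζ ⟨l+(m-1), by omega⟩).re
            / (-(∑ k ∈ range (m-1), pad ζ (l+k)).im) := by
      rw [pad_lt _ (show l-1 < l+m by omega)]
      show (ζ _ + ((d _ : ℝ) : ℂ)).re = _
      rw [Complex.add_re, Complex.ofReal_re, hde]
    have hpadbot : (pad (fun i => ζ i + (d i : ℂ)) (l+(m-1))).re
        = (ζ ⟨l+(m-1), by omega⟩).re + d ⟨l+(m-1), by omega⟩ := by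
      rw [pad_lt _ (show l+(m-1) < l+m by omega)]
      simp
    have Hul : (∑ k ∈ range (l-1), pad (fun i => ζ i + (d i : ℂ)) k).re
        < (∑ k ∈ range l, pad (fun i => ζ i + (d i : ℂ)) k).re := by
      have := congrArg Complex.re etop
      rw [Complex.add_re] at this
      rw [this, hpadtop]
      have := hre ⟨l-1, by omega⟩
      linarith
    have Hvm : (∑ k ∈ range (m-1), pad (fun i => ζ i + (d i : ℂ)) (l+k)).re
        < (∑ k ∈ range m, pad (fun i => ζ i + (d i : ℂ)) (l+k)).re := by
      have := congrArg Complex.re ebot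
      rw [Complex.add_re] at this
      rw [this, hpadbot]
      have := hd0 ⟨l+(m-1), by omega⟩
      linarith
    have HW : (∑ k ∈ range m, pad (fun i => ζ i + (d i : ℂ)) (l+k)).im
          * ((∑ k ∈ range m, pad (fun i => ζ i + (d i : ℂ)) (l+k)).re
            - (∑ k ∈ range (m-1), pad (fun i => ζ i + (d i : ℂ)) (l+k)).re)
        ≤ ((∑ k ∈ range l, pad (fun i => ζ i + (d i : ℂ)) k).re
            - (∑ k ∈ range (l-1), pad (fun i => ζ i + (d i : ℂ)) k).re)
          * ((∑ k ∈ range m, pad (fun i => ζ i + (d i : ℂ)) (l+k)).im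
            - (∑ k ∈ range (m-1), pad (fun i => ζ i + (d i : ℂ)) (l+k)).im) := by
      have eu : (∑ k ∈ range l, pad (fun i => ζ i + (d i : ℂ)) k).re
          - (∑ k ∈ range (l-1), pad (fun i => ζ i + (d i : ℂ)) k).re
          = (ζ ⟨l-1, by omega⟩).re
            + (∑ k ∈ range l, pad ζ k).im * (ζ ⟨l+(m-1), by omega⟩).re
              / (-(∑ k ∈ range (m-1), pad ζ (l+k)).im) := by
        have := congrArg Complex.re etop
        rw [Complex.add_re] at this
        rw [this, hpadtop]; ring
      have ev : (∑ k ∈ range m, pad (fun i => ζ i + (d i : ℂ)) (l+k)).re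
          - (∑ k ∈ range (m-1), pad (fun i => ζ i + (d i : ℂ)) (l+k)).re
          = (ζ ⟨l+(m-1), by omega⟩).re + d ⟨l+(m-1), by omega⟩ := by
        have := congrArg Complex.re ebot
        rw [Complex.add_re] at this
        rw [this, hpadbot]; ring
      rw [EQm, E5, eu, ev]
      have hTa : (∑ k ∈ range l, pad ζ k).im * (ζ ⟨l+(m-1), by omega⟩).re
            / (-(∑ k ∈ range (m-1), pad ζ (l+k)).im)
            * (-(∑ k ∈ range (m-1), pad ζ (l+k)).im)
          = (∑ k ∈ range l, pad ζ k).im * (ζ ⟨l+(m-1), by omega⟩).re :=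
        div_mul_cancel₀ _ (by linarith)
      have hd2 := hdT ⟨l+(m-1), by omega⟩
      have hd2' := hd0 ⟨l+(m-1), by omega⟩
      have hrepos := hre ⟨l-1, by omega⟩
      nlinarith [mul_nonneg hApos.le (sub_nonneg.mpr hd2),
        mul_pos hrepos (show (0:ℝ) < -(∑ k ∈ range (m-1), pad ζ (l+k)).im by linarith),
        mul_nonneg hrepos.le hApos.le,
        mul_nonneg hT0 hApos.le,
        hTa]
    have hcore := core' l m hl2 hm2
      (fun i => ∑ k ∈ range i, pad (fun i => ζ i + (d i : ℂ)) k)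
      (fun j => ∑ k ∈ range j, pad (fun i => ζ i + (d i : ℂ)) (l+k))
      (by simp) (by simp) hbal' him3' him4'
      (by beta_reduce; rw [E1]; exact hApos.le)
      (fun i hi => re_sum_mono (fun i => ζ i + (d i : ℂ)) hre' (fun k => k) hi)
      Hul Hvm HW
    exact hcore
end

section
/- Let l, m ≥ 1 be integers and let σ be an involution of {1,…,l+m} without fixed points. If ζ ∈ Q_{σ,l} satisfies Im(Σ_{k=1}^{l} ζ_k) > 0 and Re(ζ_{l+m}) < Re(ζ_l), then ζ defines a suitable polygon, i.e. the two broken lines L1(ζ) and L2(ζ) intersect only at their two common endpoints 0 and Σ_{k=1}^{l} ζ_k. -/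
open Finset

/-! The vertices `P_i` of `L1` other than `0` lie in the open upper half-plane, and so does all
of `L1` except `0`; the vertices `Q_j` of `L2` other than `0` and `E` lie in the open lower
half-plane, so `L1` meets `L2` outside its last segment `[Q_{m-1}, E]` only at `0`. Since
`E = P_{l-1} + ζ_l = Q_{m-1} + ζ_{l+m}` and `Re ζ_{l+m} < Re ζ_l`, we get
`Re P_{l-1} < Re Q_{m-1}`, so by monotonicity of the real parts `[Q_{m-1}, E]` can only meet
the last segment `[P_{l-1}, E]` of `L1`. Two segments ending at `E` meet only at `E` unless one
contains the starting point of the other, which is excluded here by `Im Q_{m-1} < 0` and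
`Re P_{l-1} < Re Q_{m-1}`. -/

section Polyline

variable {E : Type*} [AddCommGroup E] [Module ℝ E]

theorem convex_insert_zero_setOf_pos (f : E →ₗ[ℝ] ℝ) : Convex ℝ (insert 0 {z | 0 < f z}) := by
  refine convex_iff_forall_pos.2 fun x hx y hy a b ha hb _ => ?_
  rcases hx with rfl | hx <;> rcases hy with rfl | hy
  · simp
  all_goals
    right
    simp_all only [Set.mem_ofPred_eq, map_add, map_smul, smul_eq_mul, map_zero, mul_zero]
    positivity

theorem eq_or_mem_segment_of_mem_segment_of_mem_segment {a b c z : E}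
    (ha : z ∈ segment ℝ a c) (hb : z ∈ segment ℝ b c) :
    z = c ∨ a ∈ segment ℝ b c ∨ b ∈ segment ℝ a c := by
  rw [segment_symm ℝ a c, segment_eq_image'] at ha
  rw [segment_symm ℝ b c, segment_eq_image'] at hb
  obtain ⟨s, ⟨hs0, -⟩, rfl⟩ := ha
  obtain ⟨t, ⟨ht0, -⟩, hst⟩ := hb
  replace hst : t • (b - c) = s • (a - c) := add_left_cancel hst
  rcases hs0.eq_or_lt with rfl | hs
  · simp
  right
  rw [segment_symm ℝ b c, segment_symm ℝ a c, segment_eq_image', segment_eq_image']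
  rcases le_total s t with hle | hle
  · have ht : t ≠ 0 := (hs.trans_le hle).ne'
    refine Or.inr ⟨s / t, ⟨by positivity, div_le_one_of_le₀ hle ht0⟩, ?_⟩
    show c + _ = _
    rw [div_eq_inv_mul, mul_smul, ← hst, smul_smul, inv_mul_cancel₀ ht, one_smul,
      add_sub_cancel]
  · refine Or.inl ⟨t / s, ⟨by positivity, div_le_one_of_le₀ hle hs0⟩, ?_⟩
    show c + _ = _
    rw [div_eq_inv_mul, mul_smul, hst, smul_smul, inv_mul_cancel₀ hs.ne', one_smul,
      add_sub_cancel]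

def polyline (p : ℕ → E) (n : ℕ) : Set E :=
  ⋃ i : Fin n, segment ℝ (p i) (p (i + 1))

theorem polyline_succ (p : ℕ → E) (n : ℕ) :
    polyline p (n + 1) = polyline p n ∪ segment ℝ (p n) (p (n + 1)) := by
  ext z
  simp only [polyline, Set.mem_union, Set.mem_iUnion, Fin.exists_fin_succ', Fin.val_castSucc,
    Fin.val_last]

theorem segment_subset_polyline_succ (p : ℕ → E) (n : ℕ) :
    segment ℝ (p n) (p (n + 1)) ⊆ polyline p (n + 1) := by
  rw [polyline_succ]
  exact Set.subset_union_right

theorem start_mem_polyline (p : ℕ → E) {n : ℕ} (hn : n ≠ 0) : p 0 ∈ polyline p n := by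
  obtain ⟨n, rfl⟩ := Nat.exists_eq_succ_of_ne_zero hn
  exact Set.mem_iUnion.2 ⟨0, left_mem_segment ℝ _ _⟩

theorem end_mem_polyline_succ (p : ℕ → E) (n : ℕ) : p (n + 1) ∈ polyline p (n + 1) :=
  segment_subset_polyline_succ p n (right_mem_segment ℝ _ _)

theorem polyline_subset_of_convex {p : ℕ → E} {n : ℕ} {S : Set E} (hS : Convex ℝ S)
    (hp : ∀ i ≤ n, p i ∈ S) : polyline p n ⊆ S :=
  Set.iUnion_subset fun i => hS.segment_subset (hp _ i.is_lt.le) (hp _ i.is_lt)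

end Polyline

theorem polyline_subset_insert_zero_of_im_pos {p : ℕ → ℂ} {n : ℕ} (hp0 : p 0 = 0)
    (hp_im : ∀ i, 1 ≤ i → i ≤ n → 0 < (p i).im) : polyline p n ⊆ insert 0 {z | 0 < z.im} := by
  refine polyline_subset_of_convex (by simpa using convex_insert_zero_setOf_pos Complex.imLm)
    fun i hi => ?_
  rcases Nat.eq_zero_or_pos i with rfl | hi0
  · exact Or.inl hp0
  · exact Or.inr (hp_im i hi0 hi)

theorem polyline_subset_im_nonpos {q : ℕ → ℂ} {n : ℕ} (hq0 : q 0 = 0)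
    (hq_im : ∀ j, 1 ≤ j → j ≤ n → (q j).im < 0) : polyline q n ⊆ {z | z.im ≤ 0} := by
  refine polyline_subset_of_convex (convex_halfSpace_im_le 0) fun j hj => ?_
  rcases Nat.eq_zero_or_pos j with rfl | hj0
  · simp [hq0]
  · exact (hq_im j hj0 hj).le

theorem polyline_inter_polyline_eq_pair {p q : ℕ → ℂ} {l m : ℕ}
    (hp0 : p 0 = 0) (hq0 : q 0 = 0) (hend : p (l + 1) = q (m + 1))
    (hp_im : ∀ i, 1 ≤ i → i ≤ l + 1 → 0 < (p i).im)
    (hq_im : ∀ j, 1 ≤ j → j ≤ m → (q j).im < 0)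
    (hp_re : Monotone fun i => (p i).re) (hq_re : Monotone fun j => (q j).re)
    (hre : (p l).re < (q m).re) :
    polyline p (l + 1) ∩ polyline q (m + 1) = {0, p (l + 1)} := by
  have hm : m ≠ 0 := by
    rintro rfl
    have := hp_re (Nat.zero_le l)
    simp only [hp0, hq0, Complex.zero_re] at this hre
    linarith
  have hP := polyline_subset_insert_zero_of_im_pos hp0 hp_im
  have hPl : polyline p l ⊆ {z | z.re ≤ (p l).re} :=
    polyline_subset_of_convex (convex_halfSpace_re_le _) fun i hi => hp_re hi
  have hQm : segment ℝ (q m) (q (m + 1)) ⊆ {z | (q m).re ≤ z.re} :=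
    (convex_halfSpace_re_ge _).segment_subset (le_refl (q m).re) (hq_re m.le_succ)
  have hlast : segment ℝ (p l) (p (l + 1)) ∩ segment ℝ (q m) (p (l + 1)) ⊆ {p (l + 1)} := by
    rintro z ⟨hz1, hz2⟩
    rcases eq_or_mem_segment_of_mem_segment_of_mem_segment hz1 hz2 with h | h | h
    · exact h
    · exact absurd (hQm (hend ▸ h)) (not_le.2 hre)
    · have hqm := hq_im m (Nat.one_le_iff_ne_zero.2 hm) le_rfl
      rcases hP (segment_subset_polyline_succ p l h) with h | h
      · simp [h] at hqm
      · exact absurd h (not_lt.2 hqm.le)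
  apply subset_antisymm
  · rintro z ⟨hz1, hz2⟩
    rw [polyline_succ] at hz2
    rcases hz2 with hz2 | hz2
    · rcases hP hz1 with h | h
      · exact Or.inl h
      · exact (not_lt.2 (show z.im ≤ 0 from polyline_subset_im_nonpos hq0 hq_im hz2) h).elim
    · right
      rw [polyline_succ] at hz1
      rcases hz1 with hz1 | hz1
      · exact absurd ((hQm hz2).trans (hPl hz1)) (not_le.2 hre)
      · exact hlast ⟨hz1, hend ▸ hz2⟩
  · rintro z (rfl | rfl)
    · exact ⟨hp0 ▸ start_mem_polyline p l.succ_ne_zero, hq0 ▸ start_mem_polyline q m.succ_ne_zero⟩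
    · exact ⟨end_mem_polyline_succ p l, hend ▸ end_mem_polyline_succ q m⟩

theorem re_pad_nonneg {n : ℕ} {ζ : Fin n → ℂ} (hζ : ∀ i, 0 < (ζ i).re) (k : ℕ) :
    0 ≤ (pad ζ k).re := by
  unfold pad
  split_ifs
  exacts [(hζ _).le, le_rfl]

theorem monotone_re_sum_range {f : ℕ → ℂ} (hf : ∀ k, 0 ≤ (f k).re) :
    Monotone fun n => (∑ k ∈ range n, f k).re :=
  monotone_nat_of_le_succ fun n => by
    rw [sum_range_succ, Complex.add_re]
    linarith [hf n]

theorem brokenLine1_eq_polyline (l m : ℕ) (ζ : Fin (l + m) → ℂ) :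
    brokenLine1 l m ζ = polyline (fun i => ∑ k ∈ range i, pad ζ k) l :=
  rfl

theorem brokenLine2_eq_polyline (l m : ℕ) (ζ : Fin (l + m) → ℂ) :
    brokenLine2 l m ζ = polyline (fun j => ∑ k ∈ range j, pad ζ (l + k)) m :=
  rfl

theorem suitable_of_im_pos_of_re_lt_general (l m : ℕ) (hl : 1 ≤ l) (hm : 1 ≤ m)
    (σ : Fin (l + m) → Fin (l + m))
    (ζ : Fin (l + m) → ℂ) (hζ : ζ ∈ suspensionSet l m σ)
    (him : 0 < (∑ k ∈ Finset.range l, pad ζ k).im)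
    (hre : (pad ζ (l + m - 1)).re < (pad ζ (l - 1)).re) :
    definesSuitablePolygon l m ζ := by
  obtain ⟨-, hpos, himP, himQ, hsum⟩ := hζ
  obtain ⟨l, rfl⟩ : ∃ l', l = l' + 1 := ⟨l - 1, by omega⟩
  obtain ⟨m, rfl⟩ : ∃ m', m = m' + 1 := ⟨m - 1, by omega⟩
  have hnonneg := re_pad_nonneg hpos
  have hre_last : (∑ k ∈ range l, pad ζ k).re < (∑ k ∈ range m, pad ζ (l + 1 + k)).re := by
    have hend := congrArg Complex.re hsum
    rw [sum_range_succ, sum_range_succ, Complex.add_re, Complex.add_re] at hend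
    rw [show l + 1 + (m + 1) - 1 = l + 1 + m by omega, Nat.add_sub_cancel] at hre
    linarith
  rw [definesSuitablePolygon, brokenLine1_eq_polyline, brokenLine2_eq_polyline]
  refine polyline_inter_polyline_eq_pair (by simp) (by simp) hsum (fun i hi hil => ?_)
    (fun j hj _ => himQ j hj (by omega)) (monotone_re_sum_range hnonneg)
    (monotone_re_sum_range fun k => hnonneg _) hre_last
  rcases hil.lt_or_eq with hil | rfl
  · exact himP i hi (by omega)
  · exact him

/-- If `ζ ∈ Q_{σ,l}` satisfies `Im(ζ_1 + ⋯ + ζ_l) > 0` and `Re(ζ_{l+m}) < Re(ζ_l)`, then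
`ζ` defines a suitable polygon. (The `1`-based indices `l` and `l+m` correspond to the
`Fin` indices `l-1` and `l+m-1`.) -/
theorem suitable_of_im_pos_of_re_lt (l m : ℕ) (hl : 1 ≤ l) (hm : 1 ≤ m)
    (σ : Fin (l + m) → Fin (l + m)) (hinv : ∀ i, σ (σ i) = i) (hfix : ∀ i, σ i ≠ i)
    (ζ : Fin (l + m) → ℂ) (hζ : ζ ∈ suspensionSet l m σ)
    (him : 0 < (∑ k ∈ Finset.range l, pad ζ k).im)
    (hre : (pad ζ (l + m - 1)).re < (pad ζ (l - 1)).re) :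
    definesSuitablePolygon l m ζ :=
  suitable_of_im_pos_of_re_lt_general l m hl hm σ ζ hζ him hre
end

section
/- Let l, m ≥ 1 be integers with (l, m) ≠ (1, 1) and let σ be an involution of {1,…,l+m} without fixed points. If σ(l+m) = l, then the set Q_{σ,l} is empty. -/
open Finset

/-- If `(l, m) ≠ (1, 1)` and the involution `σ` pairs the last bottom side with the last
top side (in `1`-based notation, `σ(l+m) = l`), then there are no suspension data:
`Q_{σ,l} = ∅`. -/
theorem suspensionSet_eq_empty (l m : ℕ) (hl : 1 ≤ l) (hm : 1 ≤ m)
    (hne : ¬(l = 1 ∧ m = 1)) (σ : Fin (l + m) → Fin (l + m))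
    (hinv : ∀ i, σ (σ i) = i) (hfix : ∀ i, σ i ≠ i)
    (hlast : σ ⟨l + m - 1, by omega⟩ = ⟨l - 1, by omega⟩) :
    suspensionSet l m σ = ∅ := by
  ext ζ
  simp only [Set.mem_empty_iff_false, iff_false, suspensionSet, Set.mem_setOf_eq]
  rintro ⟨hpair, hre, hbot, htop, hsum⟩
  have hz : ζ ⟨l + m - 1, by omega⟩ = ζ ⟨l - 1, by omega⟩ := by
    rw [hpair ⟨l + m - 1, by omega⟩, hlast]
  have hS : (∑ k ∈ Finset.range l, pad ζ k)
      = (∑ k ∈ Finset.range (l - 1), pad ζ k) + ζ ⟨l - 1, by omega⟩ := by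
    rw [show Finset.range l = Finset.range (l - 1 + 1) by rw [Nat.sub_add_cancel hl],
       Finset.sum_range_succ]
    congr 1
    simp only [pad]
    rw [dif_pos (show l - 1 < l + m by omega)]
  have hT : (∑ k ∈ Finset.range m, pad ζ (l + k))
      = (∑ k ∈ Finset.range (m - 1), pad ζ (l + k)) + ζ ⟨l + m - 1, by omega⟩ := by
    rw [show Finset.range m = Finset.range (m - 1 + 1) by rw [Nat.sub_add_cancel hm],
       Finset.sum_range_succ]
    congr 1
    simp only [pad]
    rw [dif_pos (show l + (m - 1) < l + m by omega)]
    congr 1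
    apply Fin.ext
    simp only [Fin.val_mk]
    omega
  have key : (∑ k ∈ Finset.range (l - 1), pad ζ k).im
      = (∑ k ∈ Finset.range (m - 1), pad ζ (l + k)).im := by
    have := congrArg Complex.im hsum
    rw [hS, hT, hz] at this
    simpa using this
  rcases Nat.lt_or_ge l 2 with hl2 | hl2
  · -- l = 1
    have hl1 : l = 1 := by omega
    have hm2 : 2 ≤ m := by omega
    have h0 : (∑ k ∈ Finset.range (l - 1), pad ζ k).im = 0 := by
      rw [show l - 1 = 0 by omega]; simp
    have := htop (m - 1) (by omega) le_rfl
    rw [← key, h0] at this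
    exact lt_irrefl 0 this
  rcases Nat.lt_or_ge m 2 with hm2 | hm2
  · -- m = 1
    have hm1 : m = 1 := by omega
    have h0 : (∑ k ∈ Finset.range (m - 1), pad ζ (l + k)).im = 0 := by
      rw [show m - 1 = 0 by omega]; simp
    have := hbot (l - 1) (by omega) le_rfl
    rw [key, h0] at this
    exact lt_irrefl 0 this
  · have h1 := hbot (l - 1) (by omega) le_rfl
    have h2 := htop (m - 1) (by omega) le_rfl
    rw [key] at h1
    exact lt_irrefl 0 (h1.trans h2)
end
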